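/- arXiv:1008.1501 — 3 statements merged into one kernel-verified Lean document; each statement's English description precedes it below -/
import Mathlib

section
/- For every m ≥ 4, the proportion, among all voting situations with n agents on a set of m alternatives, of those in which the set of DQ winners differs from the set of Dodgson winners does not converge to 0 as n → ∞. (Equivalently, under the Impartial Anonymous Culture assumption, the probability that the DQ winner is a Dodgson winner does not converge to 1.) -/
/-!
Take four alternatives `a b c d` (the first four of `Fin m`, all others ranked below them) and
`T` copies of `pattern`, a profile of 200 votes on them. There `b` beats `a` by `16 T`, `c` beats
`b` by `24 T`, and `a` beats every other alternative by at least `32 T`, so `a` is the DQ winner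
with score `8 T`. But `b` becomes a Condorcet-tie winner after `12 T` swaps, of `c` past `b` in
votes where `c` is just above `b`, while `a` needs at least `16 T`: the quantity
`n_ba - n_ab - #(votes with b just above a)` drops by at most one per adjacent swap, and no vote
of the pattern has `b` just above `a`. These margins survive replacing up to `T / 2` of the votes
by arbitrary ones. Letting the replacement votes range over all multisets with fewer than `L`
copies of each vote other than `bcad` gives `L ^ (m! - 1)` voting situations of size `n = 400 m! L`, a fraction
at least `(1 / (800 m!)) ^ (m! - 1)` of all `(n + m! - 1).choose n ≤ (2 n) ^ (m! - 1)` of them.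
-/

open Finset Filter

/-- A vote (strict linear order) on `m` alternatives, encoded by its position map:
`v x` is the position of alternative `x`, position `0` being the top.
`v` ranks `x` above `y` iff `v x < v y`. -/
abbrev Vote (m : ℕ) := Equiv.Perm (Fin m)

/-- A profile is a list of `n` votes, one per agent. -/
abbrev Profile (m n : ℕ) := Fin n → Vote m

/-- `n_{xy}[P]`: the number of votes in `P` ranking `x` above `y`. -/
def nAbove {m n : ℕ} (P : Profile m n) (x y : Fin m) : ℕ :=
  (Finset.univ.filter (fun i => P i x < P i y)).card

/-- `adv[P](x,y) = max (0, n_{xy} - n_{yx})` (truncated subtraction on `ℕ`). -/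
def adv {m n : ℕ} (P : Profile m n) (x y : Fin m) : ℕ :=
  nAbove P x y - nAbove P y x

/-- The Tideman score `Sc_T[P](a) = Σ_{b ≠ a} adv[P](b,a)`. -/
def ScT {m n : ℕ} (P : Profile m n) (a : Fin m) : ℕ :=
  ∑ b ∈ Finset.univ.filter (fun b => b ≠ a), adv P b a

/-- The Dodgson Quick score `Sc_Q[P](a) = Σ_{b ≠ a} ⌈adv[P](b,a)/2⌉`. -/
def ScQ {m n : ℕ} (P : Profile m n) (a : Fin m) : ℕ :=
  ∑ b ∈ Finset.univ.filter (fun b => b ≠ a), (adv P b a + 1) / 2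

/-- `a` is a Condorcet-tie winner of `P` iff `adv[P](b,a) = 0` for all `b ≠ a`. -/
def CondorcetTieWinner {m n : ℕ} (P : Profile m n) (a : Fin m) : Prop :=
  ∀ b, b ≠ a → adv P b a = 0

/-- `a` is a Condorcet winner of `P` iff `adv[P](a,b) > 0` for all `b ≠ a`. -/
def CondorcetWinner {m n : ℕ} (P : Profile m n) (a : Fin m) : Prop :=
  ∀ b, b ≠ a → 0 < adv P a b

/-- `w` is obtained from the vote `v` by one swap of neighbouring alternatives
(the alternatives at consecutive positions `p` and `p+1` are exchanged). -/
def AdjSwapVote {m : ℕ} (v w : Vote m) : Prop :=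
  ∃ p q : Fin m, (q : ℕ) = (p : ℕ) + 1 ∧ w = v.trans (Equiv.swap p q)

/-- `Q` is obtained from the profile `P` by one adjacent swap in one vote. -/
def AdjSwap {m n : ℕ} (P Q : Profile m n) : Prop :=
  ∃ i : Fin n, AdjSwapVote (P i) (Q i) ∧ ∀ j, j ≠ i → Q j = P j

/-- `Reach r k P Q`: `Q` can be obtained from `P` by exactly `k` steps of `r`. -/
def Reach {α : Type*} (r : α → α → Prop) : ℕ → α → α → Prop
  | 0, P, Q => P = Q
  | (k+1), P, Q => ∃ R, r P R ∧ Reach r k R Q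

/-- The Dodgson score `Sc_D[P](a)`: the minimum number of adjacent swaps needed to
transform `P` into a profile in which `a` is a Condorcet-tie winner. -/
noncomputable def ScD {m n : ℕ} (P : Profile m n) (a : Fin m) : ℕ :=
  sInf {k | ∃ Q, Reach AdjSwap k P Q ∧ CondorcetTieWinner Q a}

/-- Variant of the Dodgson score requiring `a` to become a Condorcet winner. -/
noncomputable def ScD' {m n : ℕ} (P : Profile m n) (a : Fin m) : ℕ :=
  sInf {k | ∃ Q, Reach AdjSwap k P Q ∧ CondorcetWinner Q a}

/- Voting situations: multisets of votes.  Scores depend only on the voting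
situation of a profile, so we define them directly on multisets. -/

/-- Number of votes in the voting situation `S` ranking `x` above `y`. -/
def snAbove {m : ℕ} (S : Multiset (Vote m)) (x y : Fin m) : ℕ :=
  (S.filter (fun v => v x < v y)).card

def sadv {m : ℕ} (S : Multiset (Vote m)) (x y : Fin m) : ℕ :=
  snAbove S x y - snAbove S y x

/-- Tideman score of a voting situation. -/
def sScT {m : ℕ} (S : Multiset (Vote m)) (a : Fin m) : ℕ :=
  ∑ b ∈ Finset.univ.filter (fun b => b ≠ a), sadv S b a

/-- Dodgson Quick score of a voting situation. -/
def sScQ {m : ℕ} (S : Multiset (Vote m)) (a : Fin m) : ℕ :=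
  ∑ b ∈ Finset.univ.filter (fun b => b ≠ a), (sadv S b a + 1) / 2

def sCondorcetTieWinner {m : ℕ} (S : Multiset (Vote m)) (a : Fin m) : Prop :=
  ∀ b, b ≠ a → sadv S b a = 0

/-- One adjacent swap applied to one vote of a voting situation. -/
def sAdjSwap {m : ℕ} (S T : Multiset (Vote m)) : Prop :=
  ∃ v ∈ S, ∃ w, AdjSwapVote v w ∧ T = w ::ₘ S.erase v

/-- Dodgson score of a voting situation. -/
noncomputable def sScD {m : ℕ} (S : Multiset (Vote m)) (a : Fin m) : ℕ :=
  sInf {k | ∃ T, Reach sAdjSwap k S T ∧ sCondorcetTieWinner T a}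

/-- `a` is a Tideman winner (minimal Tideman score). -/
def sTWinner {m : ℕ} (S : Multiset (Vote m)) (a : Fin m) : Prop :=
  ∀ b, sScT S a ≤ sScT S b

/-- `a` is a DQ winner (minimal DQ score). -/
def sQWinner {m : ℕ} (S : Multiset (Vote m)) (a : Fin m) : Prop :=
  ∀ b, sScQ S a ≤ sScQ S b

/-- `a` is a Dodgson winner (minimal Dodgson score). -/
def sDWinner {m : ℕ} (S : Multiset (Vote m)) (a : Fin m) : Prop :=
  ∀ b, sScD S a ≤ sScD S b

section VotingSituations

variable {m : ℕ}

def snJustAbove (S : Multiset (Vote m)) (x y : Fin m) : ℕ :=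
  (S.filter fun v => (v y : ℕ) = v x + 1).card

theorem snAbove_add (S S' : Multiset (Vote m)) (x y : Fin m) :
    snAbove (S + S') x y = snAbove S x y + snAbove S' x y := by
  simp only [snAbove, Multiset.filter_add, Multiset.card_add]

theorem snJustAbove_add (S S' : Multiset (Vote m)) (x y : Fin m) :
    snJustAbove (S + S') x y = snJustAbove S x y + snJustAbove S' x y := by
  simp only [snJustAbove, Multiset.filter_add, Multiset.card_add]

theorem snAbove_nsmul (n : ℕ) (S : Multiset (Vote m)) (x y : Fin m) :
    snAbove (n • S) x y = n * snAbove S x y := by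
  simp only [snAbove, Multiset.filter_nsmul, Multiset.card_nsmul]

theorem snJustAbove_nsmul (n : ℕ) (S : Multiset (Vote m)) (x y : Fin m) :
    snJustAbove (n • S) x y = n * snJustAbove S x y := by
  simp only [snJustAbove, Multiset.filter_nsmul, Multiset.card_nsmul]

theorem snAbove_cons (v : Vote m) (S : Multiset (Vote m)) (x y : Fin m) :
    snAbove (v ::ₘ S) x y = snAbove S x y + if v x < v y then 1 else 0 := by
  simp only [snAbove, ← Multiset.countP_eq_card_filter, Multiset.countP_cons]

theorem snJustAbove_cons (v : Vote m) (S : Multiset (Vote m)) (x y : Fin m) :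
    snJustAbove (v ::ₘ S) x y = snJustAbove S x y + if (v y : ℕ) = v x + 1 then 1 else 0 := by
  simp only [snJustAbove, ← Multiset.countP_eq_card_filter, Multiset.countP_cons]

theorem snAbove_replicate (n : ℕ) (v : Vote m) (x y : Fin m) :
    snAbove (Multiset.replicate n v) x y = if v x < v y then n else 0 := by
  unfold snAbove
  split_ifs with h
  · rw [Multiset.filter_eq_self.2 fun w hw => (Multiset.eq_of_mem_replicate hw) ▸ h,
      Multiset.card_replicate]
  · rw [Multiset.filter_eq_nil.2 fun w hw => (Multiset.eq_of_mem_replicate hw) ▸ h,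
      Multiset.card_zero]

theorem snJustAbove_replicate (n : ℕ) (v : Vote m) (x y : Fin m) :
    snJustAbove (Multiset.replicate n v) x y = if (v y : ℕ) = v x + 1 then n else 0 := by
  unfold snJustAbove
  split_ifs with h
  · rw [Multiset.filter_eq_self.2 fun w hw => (Multiset.eq_of_mem_replicate hw) ▸ h,
      Multiset.card_replicate]
  · rw [Multiset.filter_eq_nil.2 fun w hw => (Multiset.eq_of_mem_replicate hw) ▸ h,
      Multiset.card_zero]

theorem snAbove_map {k : ℕ} (f : Vote k → Vote m) (C : Multiset (Vote k)) (x y : Fin m) :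
    snAbove (C.map f) x y = (C.filter fun v => f v x < f v y).card := by
  simp only [snAbove, Multiset.filter_map, Multiset.card_map, Function.comp_def]

theorem snAbove_eq_card_of_forall_lt {S : Multiset (Vote m)} {x y : Fin m}
    (h : ∀ v ∈ S, v x < v y) : snAbove S x y = S.card :=
  congrArg _ (Multiset.filter_eq_self.2 h)

theorem snAbove_eq_zero_of_forall_lt {S : Multiset (Vote m)} {x y : Fin m}
    (h : ∀ v ∈ S, v x < v y) : snAbove S y x = 0 :=
  Multiset.card_eq_zero.2 <| Multiset.filter_eq_nil.2 fun v hv => (h v hv).asymm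

theorem sadv_eq_zero_iff {S : Multiset (Vote m)} {x y : Fin m} :
    sadv S x y = 0 ↔ snAbove S x y ≤ snAbove S y x :=
  Nat.sub_eq_zero_iff_le

theorem le_sScQ_of_ne (S : Multiset (Vote m)) {x y : Fin m} (hyx : y ≠ x) :
    (sadv S y x + 1) / 2 ≤ sScQ S x :=
  Finset.single_le_sum (f := fun y => (sadv S y x + 1) / 2) (fun _ _ => Nat.zero_le _)
    (Finset.mem_filter.2 ⟨Finset.mem_univ y, hyx⟩)

theorem sScQ_eq_of_sadv_eq_zero {S : Multiset (Vote m)} {a b : Fin m} (hba : b ≠ a)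
    (h : ∀ x, x ≠ a → x ≠ b → sadv S x a = 0) : sScQ S a = (sadv S b a + 1) / 2 :=
  Finset.sum_eq_single_of_mem b (Finset.mem_filter.2 ⟨Finset.mem_univ b, hba⟩)
    fun x hx hxb => by simp [h x (Finset.mem_filter.1 hx).2 hxb]

end VotingSituations

theorem Reach.le_add_of_le_add_one {α : Type*} {r : α → α → Prop} (f : α → ℤ)
    (hr : ∀ x y, r x y → f x ≤ f y + 1) :
    ∀ {k : ℕ} {x y : α}, Reach r k x y → f x ≤ f y + k
  | 0, x, y, h => by rw [show x = y from h]; simp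
  | k + 1, x, y, ⟨z, hxz, hzy⟩ => by
    have := hr x z hxz
    have := Reach.le_add_of_le_add_one f hr hzy
    push_cast
    linarith

section DodgsonLowerBound

variable {m : ℕ}

/-- Term of a vote placing `b` at position `i` and `a` at position `j`; an adjacent swap lowers
it by at most one, since `a` can only overtake `b` from just below. -/
def potentialTerm (i j : Fin m) : ℤ :=
  if j < i then -1 else if (j : ℕ) = i + 1 then 0 else 1

theorem potentialTerm_le_swap {p q : Fin m} (hq : (q : ℕ) = p + 1) (i j : Fin m) :
    potentialTerm i j ≤ potentialTerm (Equiv.swap p q i) (Equiv.swap p q j) + 1 := by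
  unfold potentialTerm
  simp only [Equiv.swap_apply_def, Fin.lt_def, Fin.ext_iff]
  split_ifs <;> omega

def dodgsonPotential (S : Multiset (Vote m)) (b a : Fin m) : ℤ :=
  (S.map fun v => potentialTerm (v b) (v a)).sum

theorem dodgsonPotential_eq {a b : Fin m} (hba : b ≠ a) (S : Multiset (Vote m)) :
    dodgsonPotential S b a = snAbove S b a - snAbove S a b - snJustAbove S b a := by
  induction S using Multiset.induction_on with
  | empty => simp [dodgsonPotential, snAbove, snJustAbove]
  | cons v S ih =>
    have hv : (v b : ℕ) ≠ v a := Fin.val_injective.ne (v.injective.ne hba)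
    rw [dodgsonPotential, Multiset.map_cons, Multiset.sum_cons, ← dodgsonPotential, ih,
      snAbove_cons, snAbove_cons, snJustAbove_cons]
    unfold potentialTerm
    simp only [Fin.lt_def]
    split_ifs <;> push_cast <;> omega

theorem dodgsonPotential_le_of_sAdjSwap (a b : Fin m) {S S' : Multiset (Vote m)}
    (h : sAdjSwap S S') : dodgsonPotential S b a ≤ dodgsonPotential S' b a + 1 := by
  obtain ⟨v, hv, _, ⟨p, q, hq, rfl⟩, rfl⟩ := h
  have := potentialTerm_le_swap hq (v b) (v a)
  rw [← Multiset.cons_erase hv]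
  simp only [dodgsonPotential, Multiset.map_cons, Multiset.sum_cons, Multiset.erase_cons_head,
    Equiv.trans_apply]
  linarith

theorem exists_reach_forall_eq_zero (a : Fin m) (S : Multiset (Vote m)) :
    ∃ k T, Reach sAdjSwap k S T ∧ ∀ v ∈ T, (v a : ℕ) = 0 := by
  induction hN : (S.map fun v => (v a : ℕ)).sum using Nat.strong_induction_on generalizing S with
  | _ N ih =>
    by_cases htop : ∀ v ∈ S, (v a : ℕ) = 0
    · exact ⟨0, S, rfl, htop⟩
    simp only [not_forall] at htop
    obtain ⟨v, hv, hva⟩ := htop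
    let p : Fin m := ⟨v a - 1, by omega⟩
    let w : Vote m := v.trans (Equiv.swap p (v a))
    have hwa : (w a : ℕ) = v a - 1 := by simp [w, p]
    have hstep : sAdjSwap S (w ::ₘ S.erase v) := ⟨v, hv, w, ⟨p, v a, (Nat.sub_add_cancel (Nat.pos_of_ne_zero hva)).symm, rfl⟩, rfl⟩
    have hsum := Multiset.sum_map_erase (f := fun v : Vote m => (v a : ℕ)) hv
    have hlt : ((w ::ₘ S.erase v).map fun v => (v a : ℕ)).sum < N := by
      rw [Multiset.map_cons, Multiset.sum_cons, hwa]
      omega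
    obtain ⟨k, T, hT, htop⟩ := ih _ hlt _ rfl
    exact ⟨k + 1, T, ⟨_, hstep, hT⟩, htop⟩

theorem sScD_mem (S : Multiset (Vote m)) (a : Fin m) :
    sScD S a ∈ {k | ∃ T, Reach sAdjSwap k S T ∧ sCondorcetTieWinner T a} := by
  obtain ⟨k, T, hST, htop⟩ := exists_reach_forall_eq_zero a S
  refine Nat.sInf_mem ⟨k, T, hST, fun b hba => sadv_eq_zero_iff.2 ?_⟩
  rw [snAbove_eq_zero_of_forall_lt fun v hv => ?_]
  · exact Nat.zero_le _
  · rw [Fin.lt_def, htop v hv]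
    exact Nat.pos_of_ne_zero fun h => hba (v.injective (Fin.ext (h.trans (htop v hv).symm)))

theorem snAbove_sub_le_sScD (S : Multiset (Vote m)) {a b : Fin m} (hba : b ≠ a) :
    (snAbove S b a : ℤ) - snAbove S a b - snJustAbove S b a ≤ sScD S a := by
  obtain ⟨T, hST, hT⟩ := sScD_mem S a
  have hreach := Reach.le_add_of_le_add_one (dodgsonPotential · b a)
    (fun _ _ => dodgsonPotential_le_of_sAdjSwap a b) hST
  have htie := sadv_eq_zero_iff.1 (hT b hba)
  rw [dodgsonPotential_eq hba, dodgsonPotential_eq hba] at hreach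
  omega

end DodgsonLowerBound

section DodgsonUpperBound

variable {m : ℕ}

theorem swap_lt_swap_iff {p q i j : Fin m} (hq : (q : ℕ) = p + 1) (h : ¬(i = p ∧ j = q))
    (h' : ¬(i = q ∧ j = p)) : Equiv.swap p q i < Equiv.swap p q j ↔ i < j := by
  simp only [Equiv.swap_apply_def, Fin.lt_def, Fin.ext_iff] at *
  split_ifs <;> omega

theorem reach_add_map {f : Vote m → Vote m} {C : Multiset (Vote m)}
    (hf : ∀ v ∈ C, AdjSwapVote v (f v)) (U : Multiset (Vote m)) :
    Reach sAdjSwap (Multiset.card C) (U + C) (U + C.map f) := by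
  induction C using Multiset.induction_on generalizing U with
  | empty => simp [Reach]
  | cons v C ih =>
    rw [Multiset.card_cons]
    refine ⟨f v ::ₘ U + C, ⟨v, by simp, f v, hf v (by simp), ?_⟩, ?_⟩
    · rw [Multiset.add_cons, Multiset.erase_cons_head, Multiset.cons_add]
    · simpa only [Multiset.map_cons, Multiset.add_cons, Multiset.cons_add] using
        ih (fun w hw => hf w (Multiset.mem_cons_of_mem hw)) (f v ::ₘ U)

theorem snAbove_map_swap {C : Multiset (Vote m)} {b c x y : Fin m}
    (hC : ∀ v ∈ C, (v b : ℕ) = v c + 1) (h : ¬(x = c ∧ y = b)) (h' : ¬(x = b ∧ y = c)) :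
    snAbove (C.map fun v => v.trans (Equiv.swap (v c) (v b))) x y = snAbove C x y := by
  rw [snAbove_map]
  refine congrArg _ <| Multiset.filter_congr fun v hv => swap_lt_swap_iff (hC v hv) ?_ ?_ <;>
    simpa only [v.injective.eq_iff] using by tauto

/-- Witness: swap `c` and `b` in `k` of the votes where `c` is just above `b`. -/
theorem sScD_le_of_snJustAbove {S : Multiset (Vote m)} {b c : Fin m} {k : ℕ}
    (hk : k ≤ snJustAbove S c b) (hc : snAbove S c b ≤ snAbove S b c + 2 * k)
    (hx : ∀ x, x ≠ b → x ≠ c → snAbove S x b ≤ snAbove S b x) : sScD S b ≤ k := by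
  obtain ⟨C, hC⟩ := Multiset.card_pos_iff_exists_mem.1 <| by
    rw [Multiset.card_powersetCard]
    exact Nat.choose_pos hk
  obtain ⟨hCS, rfl⟩ := Multiset.mem_powersetCard.1 hC
  have hCadj : ∀ v ∈ C, (v b : ℕ) = v c + 1 := fun v hv =>
    (Multiset.mem_filter.1 (Multiset.mem_of_le hCS hv)).2
  have hcb : ∀ v ∈ C, v c < v b := fun v hv => Fin.lt_def.2 (by rw [hCadj v hv]; omega)
  obtain ⟨U, rfl⟩ : ∃ U, S = U + C := by
    obtain ⟨U, hU⟩ := Multiset.le_iff_exists_add.1 (hCS.trans (Multiset.filter_le _ _))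
    exact ⟨U, hU.trans (add_comm _ _)⟩
  let flip (v : Vote m) : Vote m := v.trans (Equiv.swap (v c) (v b))
  have hbc : ∀ v ∈ C.map flip, v b < v c := by
    simpa [flip, Equiv.trans_apply, Equiv.swap_apply_left, Equiv.swap_apply_right] using hcb
  refine Nat.sInf_le ⟨U + C.map flip, reach_add_map (fun v hv => ⟨v c, v b, hCadj v hv, rfl⟩) U,
    fun x hxb => ?_⟩
  rw [sadv_eq_zero_iff, snAbove_add, snAbove_add]
  by_cases hxc : x = c
  · subst hxc
    rw [snAbove_add, snAbove_add, snAbove_eq_card_of_forall_lt hcb,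
      snAbove_eq_zero_of_forall_lt hcb] at hc
    rw [snAbove_eq_zero_of_forall_lt hbc, snAbove_eq_card_of_forall_lt hbc, Multiset.card_map]
    omega
  · have := hx x hxb hxc
    rwa [snAbove_add, snAbove_add, ← snAbove_map_swap hCadj (fun h => hxc h.1) (fun h => hxb h.1),
      ← snAbove_map_swap hCadj (fun h => hxb h.2) (fun h => hxc h.2)] at this

end DodgsonUpperBound

theorem sQWinner_and_not_sDWinner {m : ℕ} {S : Multiset (Vote m)} {a b c : Fin m}
    (hab : a ≠ b) (hbc : b ≠ c) {T : ℕ} (hT : 0 < T)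
    (hba : snAbove S a b + 15 * T ≤ snAbove S b a) (hba' : snAbove S b a ≤ snAbove S a b + 17 * T)
    (hcb : snAbove S b c + 23 * T ≤ snAbove S c b) (hcb' : snAbove S c b ≤ snAbove S b c + 25 * T)
    (hax : ∀ x, x ≠ a → x ≠ b → snAbove S x a + 22 * T ≤ snAbove S a x)
    (hbx : ∀ x, x ≠ a → x ≠ b → x ≠ c → snAbove S x b ≤ snAbove S b x)
    (hjust_ba : snJustAbove S b a ≤ T) (hjust_cb : 13 * T ≤ snJustAbove S c b) :
    sQWinner S a ∧ ¬ sDWinner S a := by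
  have hQa : sScQ S a ≤ 9 * T := by
    rw [sScQ_eq_of_sadv_eq_zero hab.symm fun x hxa hxb =>
      sadv_eq_zero_iff.2 (by have := hax x hxa hxb; omega)]
    unfold sadv
    omega
  have hDb : sScD S b ≤ 13 * T := sScD_le_of_snJustAbove hjust_cb (by omega) fun x hxb hxc => by
    rcases eq_or_ne x a with rfl | hxa
    · omega
    · exact hbx x hxa hxb hxc
  have hDa : 14 * T ≤ sScD S a := by
    have := snAbove_sub_le_sScD S hab.symm
    omega
  refine ⟨fun x => ?_, fun h => ?_⟩
  · rcases eq_or_ne x a with rfl | hxa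
    · exact le_rfl
    rcases eq_or_ne x b with rfl | hxb
    · have := le_sScQ_of_ne S hbc.symm
      unfold sadv at this
      omega
    · have := le_sScQ_of_ne S hxa.symm
      have := hax x hxa hxb
      unfold sadv at *
      omega
  · have := h b
    omega

theorem Multiset.card_filter_sub_add_le {α : Type*} [DecidableEq α] (p : α → Prop)
    [DecidablePred p] (X Y E : Multiset α) :
    ((X - Y + E).filter p).card ≤ (X.filter p).card + E.card := by
  rw [Multiset.filter_add, Multiset.card_add]
  exact add_le_add
    (Multiset.card_le_card (Multiset.filter_le_filter p (Multiset.sub_le_self X Y)))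
    (Multiset.card_le_card (Multiset.filter_le p E))

theorem Multiset.card_filter_le_sub_add {α : Type*} [DecidableEq α] (p : α → Prop)
    [DecidablePred p] (X Y E : Multiset α) :
    (X.filter p).card ≤ ((X - Y + E).filter p).card + Y.card := calc
  (X.filter p).card ≤ ((X - Y + Y).filter p).card :=
    Multiset.card_le_card (Multiset.filter_le_filter p Multiset.le_sub_add)
  _ ≤ ((X - Y + E).filter p).card + Y.card := by
    rw [Multiset.filter_add, Multiset.filter_add, Multiset.card_add, Multiset.card_add]
    have := Multiset.card_le_card (Multiset.filter_le p Y)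
    omega

theorem Fin.exists_castLE_or_le {k m : ℕ} (h : k ≤ m) (x : Fin m) :
    (∃ i, x = Fin.castLE h i) ∨ k ≤ x := by
  by_cases hx : (x : ℕ) < k
  · exact Or.inl ⟨⟨x, hx⟩, rfl⟩
  · exact Or.inr (not_lt.1 hx)

section Extension

variable {k m : ℕ} (h : k ≤ m)

/-- The new alternatives keep their positions, below the old ones. -/
def Vote.extend (σ : Vote k) : Vote m :=
  σ.viaFintypeEmbedding (Fin.castLEEmb h)

theorem Vote.extend_castLE (σ : Vote k) (i : Fin k) :
    Vote.extend h σ (Fin.castLE h i) = Fin.castLE h (σ i) :=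
  Equiv.Perm.viaFintypeEmbedding_apply_image ..

theorem Vote.extend_lt_extend_of_le (σ : Vote k) (i : Fin k) {z : Fin m} (hz : k ≤ z) :
    Vote.extend h σ (Fin.castLE h i) < Vote.extend h σ z := by
  rw [Vote.extend_castLE, Vote.extend, Equiv.Perm.viaFintypeEmbedding_apply_notMem_range]
  · exact Fin.lt_def.2 (by simp only [Fin.val_castLE]; omega)
  · rintro ⟨j, rfl⟩
    simp only [Fin.coe_castLEEmb, Fin.val_castLE] at hz
    omega

variable (B : Multiset (Vote k))

theorem snAbove_map_extend (i j : Fin k) :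
    snAbove (B.map (Vote.extend h)) (Fin.castLE h i) (Fin.castLE h j) = snAbove B i j := by
  rw [snAbove_map]
  simp only [Vote.extend_castLE, Fin.castLE_lt_castLE_iff, snAbove]

theorem snJustAbove_map_extend (i j : Fin k) :
    snJustAbove (B.map (Vote.extend h)) (Fin.castLE h i) (Fin.castLE h j) = snJustAbove B i j := by
  simp only [snJustAbove, Multiset.filter_map, Multiset.card_map, Function.comp_def,
    Vote.extend_castLE, Fin.val_castLE]

theorem snAbove_map_extend_of_le (i : Fin k) {z : Fin m} (hz : k ≤ z) :
    snAbove (B.map (Vote.extend h)) z (Fin.castLE h i) = 0 ∧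
      snAbove (B.map (Vote.extend h)) (Fin.castLE h i) z = B.card := by
  have hlt : ∀ v ∈ B.map (Vote.extend h), v (Fin.castLE h i) < v z := by
    simpa using fun σ _ => Vote.extend_lt_extend_of_le h σ i hz
  rw [snAbove_eq_zero_of_forall_lt hlt, snAbove_eq_card_of_forall_lt hlt, Multiset.card_map]
  exact ⟨rfl, rfl⟩

end Extension

/-! Votes on `Fin 4`, whose elements `0 1 2 3` play the alternatives `a b c d`; each vote is
named by its ranking from top to bottom and given by its position map. -/

noncomputable def bcad : Vote 4 := Equiv.ofBijective ![2, 0, 1, 3] (by decide)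
noncomputable def cbda : Vote 4 := Equiv.ofBijective ![3, 1, 0, 2] (by decide)
noncomputable def acbd : Vote 4 := Equiv.ofBijective ![0, 2, 1, 3] (by decide)
noncomputable def bdac : Vote 4 := Equiv.ofBijective ![2, 0, 3, 1] (by decide)

noncomputable def pattern : Multiset (Vote 4) :=
  .replicate 64 bcad + .replicate 20 cbda + .replicate 92 acbd + .replicate 24 bdac

theorem snAbove_pattern :
    snAbove pattern 0 1 = 92 ∧ snAbove pattern 1 0 = 108 ∧
    snAbove pattern 1 2 = 88 ∧ snAbove pattern 2 1 = 112 ∧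
    snAbove pattern 2 0 = 84 ∧ snAbove pattern 0 2 = 116 ∧
    snAbove pattern 3 0 = 44 ∧ snAbove pattern 0 3 = 156 ∧
    snAbove pattern 3 1 = 0 ∧ snAbove pattern 1 3 = 200 := by
  simp only [pattern, snAbove_add, snAbove_replicate]
  decide

theorem snJustAbove_pattern : snJustAbove pattern 1 0 = 0 ∧ snJustAbove pattern 2 1 = 112 := by
  simp only [pattern, snJustAbove_add, snJustAbove_replicate]
  decide

theorem card_pattern : pattern.card = 200 := by
  simp only [pattern, Multiset.card_add, Multiset.card_replicate]

theorem replicate_le_pattern : Multiset.replicate 64 bcad ≤ pattern := by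
  simp only [pattern, add_assoc]
  exact Multiset.le_add_right _ _

section Disagreement

variable {m : ℕ} (h : 4 ≤ m)

noncomputable def disagreementProfile (T : ℕ) (E : Multiset (Vote m)) : Multiset (Vote m) :=
  T • pattern.map (Vote.extend h) - .replicate E.card (Vote.extend h bcad) + E

theorem replicate_le_nsmul_pattern {T e : ℕ} (he : e ≤ 64 * T) :
    .replicate e (Vote.extend h bcad) ≤ T • pattern.map (Vote.extend h) := calc
  _ ≤ T • Multiset.replicate 64 (Vote.extend h bcad) := by
    rw [Multiset.nsmul_replicate]
    exact (Multiset.replicate_le_replicate _).2 (by omega)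
  _ ≤ T • pattern.map (Vote.extend h) := by
    rw [← Multiset.map_replicate]
    exact nsmul_le_nsmul_right (Multiset.map_le_map replicate_le_pattern) T

theorem card_disagreementProfile {T : ℕ} {E : Multiset (Vote m)} (hE : E.card ≤ 64 * T) :
    (disagreementProfile h T E).card = 200 * T := by
  have hle := replicate_le_nsmul_pattern h hE
  have := Multiset.card_le_card hle
  rw [disagreementProfile, Multiset.card_add, Multiset.card_sub hle, Multiset.card_nsmul,
    Multiset.card_map, card_pattern] at *
  simp only [Multiset.card_replicate] at *
  omega

theorem disagreementProfile_injOn (T : ℕ) :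
    Set.InjOn (disagreementProfile h T) {E | Vote.extend h bcad ∉ E} := by
  intro E hE E' hE' hEE'
  have key : ∀ F : Multiset (Vote m), Vote.extend h bcad ∉ F →
      (disagreementProfile h T F).filter (· ≠ Vote.extend h bcad) =
        (T • pattern.map (Vote.extend h)).filter (· ≠ Vote.extend h bcad) + F := by
    intro F hF
    rw [disagreementProfile, Multiset.filter_add, Multiset.filter_sub,
      Multiset.filter_eq_nil.2 fun v hv => not_not.2 (Multiset.eq_of_mem_replicate hv),
      (Multiset.filter_eq_self (s := F)).2 fun v hv => by rintro rfl; exact hF hv,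
      Multiset.sub_zero]
  have := congrArg (Multiset.filter (· ≠ Vote.extend h bcad)) hEE'
  rwa [key E hE, key E' hE', add_right_inj] at this

section Approximation

variable (T : ℕ) (E : Multiset (Vote m))

theorem snAbove_disagreementProfile_le (x y : Fin m) :
    snAbove (disagreementProfile h T E) x y ≤
      T * snAbove (pattern.map (Vote.extend h)) x y + E.card :=
  snAbove_nsmul T _ x y ▸ Multiset.card_filter_sub_add_le _ _ _ _

theorem le_snAbove_disagreementProfile (x y : Fin m) :
    T * snAbove (pattern.map (Vote.extend h)) x y ≤
      snAbove (disagreementProfile h T E) x y + E.card :=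
  snAbove_nsmul T _ x y ▸ Multiset.card_replicate E.card (Vote.extend h bcad) ▸
    Multiset.card_filter_le_sub_add _ _ _ _

theorem snAbove_disagreementProfile_castLE (i j : Fin 4) :
    snAbove (disagreementProfile h T E) (Fin.castLE h i) (Fin.castLE h j) ≤
        T * snAbove pattern i j + E.card ∧
      T * snAbove pattern i j ≤
        snAbove (disagreementProfile h T E) (Fin.castLE h i) (Fin.castLE h j) + E.card :=
  snAbove_map_extend h pattern i j ▸
    ⟨snAbove_disagreementProfile_le h T E _ _, le_snAbove_disagreementProfile h T E _ _⟩

theorem snJustAbove_disagreementProfile_castLE (i j : Fin 4) :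
    snJustAbove (disagreementProfile h T E) (Fin.castLE h i) (Fin.castLE h j) ≤
        T * snJustAbove pattern i j + E.card ∧
      T * snJustAbove pattern i j ≤
        snJustAbove (disagreementProfile h T E) (Fin.castLE h i) (Fin.castLE h j) + E.card := by
  rw [← snJustAbove_map_extend h pattern i j, ← snJustAbove_nsmul]
  exact ⟨Multiset.card_filter_sub_add_le _ _ _ _,
    Multiset.card_replicate E.card (Vote.extend h bcad) ▸ Multiset.card_filter_le_sub_add _ _ _ _⟩

theorem snAbove_disagreementProfile_of_le (i : Fin 4) {z : Fin m} (hz : 4 ≤ (z : ℕ)) :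
    snAbove (disagreementProfile h T E) z (Fin.castLE h i) ≤ E.card ∧
      200 * T ≤ snAbove (disagreementProfile h T E) (Fin.castLE h i) z + E.card := by
  obtain ⟨h0, h1⟩ := snAbove_map_extend_of_le h pattern i hz
  have := snAbove_disagreementProfile_le h T E z (Fin.castLE h i)
  have := le_snAbove_disagreementProfile h T E (Fin.castLE h i) z
  rw [h0] at *
  rw [h1, card_pattern] at *
  omega

end Approximation

theorem sQWinner_and_not_sDWinner_disagreementProfile {T : ℕ} (hT : 0 < T)
    {E : Multiset (Vote m)} (hE : 2 * E.card ≤ T) :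
    sQWinner (disagreementProfile h T E) (Fin.castLE h 0) ∧
      ¬ sDWinner (disagreementProfile h T E) (Fin.castLE h 0) := by
  have hpair (i j : Fin 4) (n : ℕ) (hn : snAbove pattern i j = n) :=
    hn ▸ snAbove_disagreementProfile_castLE h T E i j
  have hjust (i j : Fin 4) (n : ℕ) (hn : snJustAbove pattern i j = n) :=
    hn ▸ snJustAbove_disagreementProfile_castLE h T E i j
  obtain ⟨h01, h10, h12, h21, h20, h02, h30, h03, h31, h13⟩ := snAbove_pattern
  obtain ⟨j10, j21⟩ := snJustAbove_pattern
  have hfin4 : ∀ i : Fin 4, i = 0 ∨ i = 1 ∨ i = 2 ∨ i = 3 := by decide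
  have hι := Fin.castLE_injective h
  refine sQWinner_and_not_sDWinner (b := Fin.castLE h 1) (c := Fin.castLE h 2)
    (hι.ne (by decide)) (hι.ne (by decide)) hT ?_ ?_ ?_ ?_ (fun x hxa hxb => ?_)
    (fun x hxa hxb hxc => ?_) ?_ ?_
  · have := hpair 0 1 _ h01; have := hpair 1 0 _ h10; omega
  · have := hpair 0 1 _ h01; have := hpair 1 0 _ h10; omega
  · have := hpair 1 2 _ h12; have := hpair 2 1 _ h21; omega
  · have := hpair 1 2 _ h12; have := hpair 2 1 _ h21; omega
  · rcases Fin.exists_castLE_or_le h x with ⟨i, rfl⟩ | hx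
    · rcases hfin4 i with rfl | rfl | rfl | rfl
      · exact absurd rfl hxa
      · exact absurd rfl hxb
      · have := hpair 2 0 _ h20; have := hpair 0 2 _ h02; omega
      · have := hpair 3 0 _ h30; have := hpair 0 3 _ h03; omega
    · have := snAbove_disagreementProfile_of_le h T E 0 hx; omega
  · rcases Fin.exists_castLE_or_le h x with ⟨i, rfl⟩ | hx
    · rcases hfin4 i with rfl | rfl | rfl | rfl
      · exact absurd rfl hxa
      · exact absurd rfl hxb
      · exact absurd rfl hxc
      · have := hpair 3 1 _ h31; have := hpair 1 3 _ h13; omega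
    · have := snAbove_disagreementProfile_of_le h T E 1 hx; omega
  · have := hjust 1 0 _ j10; omega
  · have := hjust 2 1 _ j21; omega

end Disagreement

section SumReplicate

variable {α : Type*} [Fintype α] [DecidableEq α] {v : α}

def sumReplicate (g : {w // w ≠ v} → ℕ) : Multiset α :=
  ∑ w, .replicate (g w) (w : α)

theorem count_sumReplicate (g : {w // w ≠ v} → ℕ) (w : {w // w ≠ v}) :
    (sumReplicate g).count (w : α) = g w := by
  rw [sumReplicate, Multiset.count_sum', Fintype.sum_eq_single w]
  · exact Multiset.count_replicate_self ..
  · intro u hu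
    rw [Multiset.count_replicate, if_neg (Subtype.val_injective.ne hu)]

theorem notMem_sumReplicate (g : {w // w ≠ v} → ℕ) : v ∉ sumReplicate g := by
  simp only [sumReplicate, Multiset.mem_sum, Finset.mem_univ, true_and, not_exists]
  exact fun w hv => w.2 (Multiset.eq_of_mem_replicate hv).symm

theorem card_sumReplicate (g : {w // w ≠ v} → ℕ) : (sumReplicate g).card = ∑ w, g w := by
  simp only [sumReplicate, Multiset.card_sum, Multiset.card_replicate]

theorem sumReplicate_injective : Function.Injective (sumReplicate (v := v)) := fun g g' hg =>
  funext fun w => by rw [← count_sumReplicate g w, hg, count_sumReplicate]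

end SumReplicate

def disagreementSet (m n : ℕ) : Set (Sym (Vote m) n) :=
  {S | {x | sQWinner (S : Multiset (Vote m)) x} ≠ {x | sDWinner (S : Multiset (Vote m)) x}}

theorem pow_le_ncard_disagreementSet {m : ℕ} (h : 4 ≤ m) {L : ℕ} (hL : 0 < L) :
    L ^ (m.factorial - 1) ≤ (disagreementSet m (400 * m.factorial * L)).ncard := by
  set v := Vote.extend h bcad
  have hcard : Fintype.card {w // w ≠ v} = m.factorial - 1 := by
    rw [Fintype.card_subtype_compl, Fintype.card_subtype_eq, Fintype.card_perm, Fintype.card_fin]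
  let E (g : {w // w ≠ v} → Fin L) : Multiset (Vote m) := sumReplicate fun w => (g w : ℕ)
  have hE : ∀ g, (E g).card ≤ m.factorial * L := fun g => calc
    (E g).card = ∑ w, (g w : ℕ) := card_sumReplicate _
    _ ≤ ∑ _w : {w // w ≠ v}, L := Finset.sum_le_sum fun w _ => (g w).isLt.le
    _ ≤ m.factorial * L := by
      rw [Finset.sum_const, Finset.card_univ, hcard, smul_eq_mul]
      exact Nat.mul_le_mul_right _ (Nat.sub_le _ _)
  let F (g : {w // w ≠ v} → Fin L) : Sym (Vote m) (400 * m.factorial * L) :=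
    ⟨disagreementProfile h (2 * m.factorial * L) (E g), by
      rw [card_disagreementProfile h (by have := hE g; nlinarith)]
      ring⟩
  have hF : ∀ g ∈ Set.univ, F g ∈ disagreementSet m (400 * m.factorial * L) := by
    intro g _ heq
    obtain ⟨hQ, hD⟩ := sQWinner_and_not_sDWinner_disagreementProfile h
      (T := 2 * m.factorial * L) (by positivity) (by have := hE g; linarith)
    exact hD (Set.ext_iff.1 heq _ |>.1 hQ)
  have hFinj : Set.InjOn F Set.univ := fun g _ g' _ hgg' => by
    have := disagreementProfile_injOn h _ (notMem_sumReplicate _) (notMem_sumReplicate _)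
      (congrArg Subtype.val hgg')
    funext w
    exact Fin.ext (congrFun (sumReplicate_injective this) w)
  calc L ^ (m.factorial - 1) = (Set.univ : Set ({w // w ≠ v} → Fin L)).ncard := by
        rw [Set.ncard_univ, Nat.card_eq_fintype_card, Fintype.card_fun, Fintype.card_fin, hcard]
    _ ≤ _ := Set.ncard_le_ncard_of_injOn F hF hFinj (Set.toFinite _)

theorem choose_add_le_two_mul_pow {n k : ℕ} (hk : k ≤ n) : (n + k).choose n ≤ (2 * n) ^ k := by
  rw [Nat.choose_symm_add]
  exact (Nat.choose_le_pow _ _).trans (Nat.pow_le_pow_left (by omega) _)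

theorem pow_le_ncard_disagreementSet_div_choose {m : ℕ} (h : 4 ≤ m) {L : ℕ} (hL : 0 < L) :
    (1 / (800 * m.factorial : ℝ)) ^ (m.factorial - 1) ≤
      (disagreementSet m (400 * m.factorial * L)).ncard /
        ((400 * m.factorial * L + m.factorial - 1).choose (400 * m.factorial * L) : ℝ) := by
  set K := m.factorial
  set n := 400 * K * L
  have hK : 0 < K := Nat.factorial_pos m
  have hKn : K - 1 ≤ n := by
    have : K ≤ n := by simp only [n]; nlinarith
    omega
  have hchoose := choose_add_le_two_mul_pow hKn
  rw [← Nat.add_sub_assoc hK] at hchoose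
  calc (1 / (800 * K : ℝ)) ^ (K - 1) = (L : ℝ) ^ (K - 1) / ((2 * n : ℕ) : ℝ) ^ (K - 1) := by
        rw [← div_pow]
        congr 1
        simp only [n]
        push_cast
        field_simp
        ring
    _ ≤ _ := by
      apply div_le_div₀ (by positivity) (by exact_mod_cast pow_le_ncard_disagreementSet h hL)
        (by exact_mod_cast Nat.choose_pos (by omega))
      exact_mod_cast hchoose

/-- For every `m ≥ 4`, the proportion, among all voting situations with `n` agents
on `m` alternatives, of those in which the set of DQ winners differs from the
set of Dodgson winners does not converge to `0` as `n → ∞` (equivalently, under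
the Impartial Anonymous Culture assumption, the probability that the DQ and
Dodgson rules pick the same set of winners does not converge to 1). -/
theorem stmt_16 (m : ℕ) (hm : 4 ≤ m) :
    ¬ Filter.Tendsto (fun n : ℕ =>
        (Set.ncard {S : Sym (Vote m) n |
            {x : Fin m | sQWinner (S : Multiset (Vote m)) x} ≠
            {x : Fin m | sDWinner (S : Multiset (Vote m)) x}} : ℝ) /
          Nat.choose (n + Nat.factorial m - 1) n)
      Filter.atTop (nhds 0) := by
  intro hlim
  have hε : (0 : ℝ) < (1 / (800 * m.factorial : ℝ)) ^ (m.factorial - 1) := by positivity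
  have hn : Tendsto (fun L : ℕ => 400 * m.factorial * L) atTop atTop :=
    tendsto_id.const_mul_atTop' (by positivity)
  obtain ⟨L, hlt, hL⟩ :=
    (((hlim.comp hn).eventually (gt_mem_nhds hε)).and (eventually_gt_atTop 0)).exists
  exact (pow_le_ncard_disagreementSet_div_choose hm hL).not_gt hlt
end

section
/- For every profile P and every alternative x ∈ A, Sc_T[P](x)/2 ≤ Sc_Q[P](x) ≤ Sc_D[P](x); that is, half the Tideman score and the DQ score are lower bounds for the Dodgson score. -/
open Finset Filter

/-!
The first inequality holds termwise: `adv ≤ 2 ⌈adv / 2⌉`.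

For the second, an adjacent swap in one vote reverses the relative order of a single pair of
alternatives, so it changes at most one advantage `adv(b, a)`, and that one by at most `2`;
hence it lowers the DQ score of `a` by at most `1`. A Condorcet-tie winner has DQ score `0`, so
every sequence of swaps making `a` one has length at least `Sc_Q(a)`. The set whose infimum
defines `Sc_D` is nonempty (lift `a` to the top of every vote), so that infimum is not the junk
value `sInf ∅ = 0`.
-/

lemma trans_swap_lt_iff {m : ℕ} (v : Vote m) {p q : Fin m} (hpq : (q : ℕ) = p + 1)
    {c d : Fin m} (h₁ : ¬(v c = p ∧ v d = q)) (h₂ : ¬(v c = q ∧ v d = p)) :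
    v.trans (Equiv.swap p q) c < v.trans (Equiv.swap p q) d ↔ v c < v d := by
  simp only [Fin.ext_iff, not_and] at h₁ h₂
  simp only [Equiv.trans_apply, Equiv.swap_apply_def, Fin.ext_iff, Fin.lt_def]
  split_ifs <;> omega

lemma AdjSwapVote.exists_lt_iff_of_ne {m : ℕ} {v w : Vote m} (h : AdjSwapVote v w)
    (a : Fin m) :
    ∃ b₀, ∀ b, b ≠ b₀ → (w b < w a ↔ v b < v a) ∧ (w a < w b ↔ v a < v b) := by
  obtain ⟨p, q, hpq, rfl⟩ := h
  have hne : p ≠ q := Fin.ne_of_val_ne (by omega)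
  refine ⟨if v a = p then v.symm q else v.symm p, fun b hb => ?_⟩
  split_ifs at hb with hap <;>
    refine ⟨trans_swap_lt_iff v hpq ?_ ?_, trans_swap_lt_iff v hpq ?_ ?_⟩ <;>
    rintro ⟨h₁, h₂⟩ <;> simp_all [Equiv.eq_symm_apply]

lemma nAbove_congr {m n : ℕ} {P Q : Profile m n} {c d : Fin m}
    (h : ∀ j, P j c < P j d ↔ Q j c < Q j d) : nAbove P c d = nAbove Q c d :=
  congrArg card (filter_congr fun j _ => h j)

lemma nAbove_le_add_one {m n : ℕ} {P Q : Profile m n} (i : Fin n)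
    (h : ∀ j, j ≠ i → Q j = P j) (c d : Fin m) : nAbove P c d ≤ nAbove Q c d + 1 := by
  have hsub : univ.filter (fun j => P j c < P j d) ⊆
      insert i (univ.filter fun j => Q j c < Q j d) := by
    intro j hj
    by_cases hji : j = i
    · simp [hji]
    · exact mem_insert_of_mem (by simpa [h j hji] using hj)
  exact (card_le_card hsub).trans (card_insert_le _ _)

lemma adv_le_add_two {m n : ℕ} {P Q : Profile m n} (i : Fin n) (h : ∀ j, j ≠ i → Q j = P j)
    (b a : Fin m) : adv P b a ≤ adv Q b a + 2 := by
  have h₁ := nAbove_le_add_one i h b a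
  have h₂ := nAbove_le_add_one i (fun j hj => (h j hj).symm) a b
  unfold adv
  omega

lemma AdjSwap.exists_adv_eq_of_ne {m n : ℕ} {P Q : Profile m n} (h : AdjSwap P Q)
    (a : Fin m) : ∃ b₀, ∀ b, b ≠ b₀ → adv Q b a = adv P b a := by
  obtain ⟨i, hi, hQ⟩ := h
  obtain ⟨b₀, hb₀⟩ := hi.exists_lt_iff_of_ne a
  refine ⟨b₀, fun b hb => ?_⟩
  have hagree : ∀ c d, (Q i c < Q i d ↔ P i c < P i d) → nAbove Q c d = nAbove P c d :=
    fun c d hi => nAbove_congr fun j => by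
      by_cases hj : j = i
      · exact hj ▸ hi
      · rw [hQ j hj]
  unfold adv
  rw [hagree b a (hb₀ b hb).1, hagree a b (hb₀ b hb).2]

lemma ScQ_le_add_one_of_adjSwap {m n : ℕ} {P Q : Profile m n} (h : AdjSwap P Q) (a : Fin m) :
    ScQ P a ≤ ScQ Q a + 1 := by
  obtain ⟨b₀, hb₀⟩ := h.exists_adv_eq_of_ne a
  have hterm : ∀ b, (adv P b a + 1) / 2 ≤ (adv Q b a + 1) / 2 + if b = b₀ then 1 else 0 := by
    intro b
    by_cases hb : b = b₀
    · subst hb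
      obtain ⟨i, -, hQ⟩ := h
      have := adv_le_add_two i hQ b a
      simp only [if_true]
      omega
    · simp [hb, hb₀ b hb]
  calc ScQ P a
      ≤ ∑ b ∈ univ.filter (· ≠ a), ((adv Q b a + 1) / 2 + if b = b₀ then 1 else 0) :=
        sum_le_sum fun b _ => hterm b
    _ = ScQ Q a + if b₀ ∈ univ.filter (· ≠ a) then 1 else 0 := by
        rw [sum_add_distrib, sum_ite_eq']
        rfl
    _ ≤ ScQ Q a + 1 := by split_ifs <;> omega

lemma ScQ_le_add_of_reach {m n : ℕ} {k : ℕ} {P Q : Profile m n} (h : Reach AdjSwap k P Q)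
    (a : Fin m) : ScQ P a ≤ ScQ Q a + k := by
  induction k generalizing P with
  | zero => cases h; omega
  | succ k ih =>
    obtain ⟨R, hPR, hRQ⟩ := h
    have := ScQ_le_add_one_of_adjSwap hPR a
    have := ih hRQ
    omega

lemma ScQ_eq_zero_of_condorcetTieWinner {m n : ℕ} {P : Profile m n} {a : Fin m}
    (h : CondorcetTieWinner P a) : ScQ P a = 0 :=
  sum_eq_zero fun b hb => by simp [h b (mem_filter.1 hb).2]

lemma ScT_le_two_mul_ScQ {m n : ℕ} (P : Profile m n) (a : Fin m) : ScT P a ≤ 2 * ScQ P a := by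
  rw [ScT, ScQ, mul_sum]
  exact sum_le_sum fun b _ => by omega

lemma condorcetTieWinner_of_forall_top {m n : ℕ} {P : Profile m n} {x : Fin m}
    (h : ∀ i, (P i x : ℕ) = 0) : CondorcetTieWinner P x := by
  intro b _
  have : nAbove P b x = 0 :=
    card_eq_zero.2 <| filter_eq_empty_iff.2 fun i _ => by simp [Fin.lt_def, h i]
  simp [adv, this]

lemma exists_adjSwap_sum_position_lt {m n : ℕ} (P : Profile m n) (x : Fin m) {i : Fin n}
    (hi : 0 < (P i x : ℕ)) :
    ∃ Q, AdjSwap P Q ∧ ∑ j, (Q j x : ℕ) < ∑ j, (P j x : ℕ) := by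
  obtain ⟨q, hq⟩ : ∃ q, P i x = q := ⟨_, rfl⟩
  let p : Fin m := ⟨q - 1, by omega⟩
  have hpq : (q : ℕ) = p + 1 := by simp only [p]; omega
  have hx : (P i).trans (Equiv.swap p q) x = p := by simp [hq]
  refine ⟨Function.update P i ((P i).trans (Equiv.swap p q)),
    ⟨i, ⟨p, q, hpq, by simp⟩, fun j hj => Function.update_of_ne hj _ _⟩, ?_⟩
  apply sum_lt_sum
  · intro j _
    by_cases hj : j = i
    · subst hj; simp only [Function.update_self, hx, hq, p]; omega
    · simp [Function.update_of_ne hj]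
  · exact ⟨i, mem_univ _, by simp only [Function.update_self, hx, hq, p]; omega⟩

lemma exists_reach_condorcetTieWinner {m n : ℕ} (P : Profile m n) (x : Fin m) :
    ∃ k Q, Reach AdjSwap k P Q ∧ CondorcetTieWinner Q x := by
  induction hN : ∑ j, (P j x : ℕ) using Nat.strong_induction_on generalizing P with
  | _ N ih =>
    by_cases htop : ∀ i, (P i x : ℕ) = 0
    · exact ⟨0, P, rfl, condorcetTieWinner_of_forall_top htop⟩
    · push Not at htop
      obtain ⟨i, hi⟩ := htop
      obtain ⟨Q, hPQ, hlt⟩ := exists_adjSwap_sum_position_lt P x (Nat.pos_of_ne_zero hi)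
      obtain ⟨k, R, hQR, hR⟩ := ih _ (hN ▸ hlt) Q rfl
      exact ⟨k + 1, R, ⟨Q, hPQ, hQR⟩, hR⟩

theorem stmt_18_general {m n : ℕ} (P : Profile m n) (x : Fin m) :
    (ScT P x : ℚ) / 2 ≤ (ScQ P x : ℚ) ∧ ScQ P x ≤ ScD P x := by
  constructor
  · rw [div_le_iff₀ two_pos]
    exact_mod_cast (ScT_le_two_mul_ScQ P x).trans_eq (mul_comm _ _)
  · obtain ⟨k, Q, hPQ, hQ⟩ := exists_reach_condorcetTieWinner P x
    refine le_csInf ⟨k, Q, hPQ, hQ⟩ ?_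
    rintro k ⟨Q, hPQ, hQ⟩
    simpa [ScQ_eq_zero_of_condorcetTieWinner hQ] using ScQ_le_add_of_reach hPQ x

/-- Half the Tideman score and the DQ score are lower bounds for the Dodgson
score: `Sc_T[P](x)/2 ≤ Sc_Q[P](x) ≤ Sc_D[P](x)`. -/
theorem stmt_18 {m n : ℕ} (hm : 2 ≤ m) (P : Profile m n) (x : Fin m) :
    (ScT P x : ℚ) / 2 ≤ (ScQ P x : ℚ) ∧ ScQ P x ≤ ScD P x :=
  stmt_18_general P x
end

section
/- Let P be a profile with n ≥ 1 votes and a ∈ A. Define Sc_D'[P](a) as the minimum number of adjacent swaps needed to transform P into a profile in which a is a Condorcet winner (this minimum exists since a can be moved to the top of every vote). Then Sc_D[P](a) ≤ Sc_D'[P](a) ≤ Sc_D[P](a) + (m − 1)². -/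
open Finset Filter

lemma swap_lt_iff {m : ℕ} (p q u1 u2 : Fin m) (hq : (q:ℕ) = p + 1)
    (h1 : ¬(u1 = p ∧ u2 = q)) (h2 : ¬(u1 = q ∧ u2 = p)) :
    (Equiv.swap p q u1 < Equiv.swap p q u2 ↔ u1 < u2) := by
  simp only [Equiv.swap_apply_def, Fin.lt_def]
  simp only [not_and] at h1 h2
  have e1p := Fin.ext_iff (a := u1) (b := p)
  have e1q := Fin.ext_iff (a := u1) (b := q)
  have e2p := Fin.ext_iff (a := u2) (b := p)
  have e2q := Fin.ext_iff (a := u2) (b := q)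
  have h1' : (u1:ℕ) = p → (u2:ℕ) ≠ q := fun hh => fun hh2 => h1 (e1p.2 hh) (e2q.2 hh2)
  have h2' : (u1:ℕ) = q → (u2:ℕ) ≠ p := fun hh => fun hh2 => h2 (e1q.2 hh) (e2p.2 hh2)
  split_ifs <;> simp only [Fin.ext_iff] at * <;> omega

lemma reach_trans {α : Type*} {r : α → α → Prop} :
    ∀ {j k : ℕ} {P Q R : α}, Reach r j P Q → Reach r k Q R → Reach r (j + k) P R := by
  intro j
  induction j with
  | zero => intro k P Q R h1 h2; cases h1; simpa using h2
  | succ j ih =>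
    rintro k P Q R ⟨S, hS, hSQ⟩ h2
    have : j + 1 + k = (j + k) + 1 := by omega
    rw [this]
    exact ⟨S, hS, ih hSQ h2⟩

lemma swapStep {m n : ℕ} (P : Profile m n) (i : Fin n) (a : Fin m) (h : 0 < (P i a : ℕ)) :
    ∃ (c : Fin m) (Q : Profile m n),
      AdjSwap P Q ∧ (Q i a : ℕ) + 1 = (P i a : ℕ) ∧ (∀ j, j ≠ i → Q j = P j) ∧
      c ≠ a ∧ (P i c : ℕ) + 1 = (P i a : ℕ) ∧
      (∀ x y, ¬(x = a ∧ y = c) → ¬(x = c ∧ y = a) → nAbove Q x y = nAbove P x y) ∧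
      (∀ x, x ≠ a → x ≠ c → Q i x = P i x) ∧
      nAbove Q a c = nAbove P a c + 1 ∧
      nAbove Q c a + 1 = nAbove P c a := by
  set v := P i with hv
  have hva : (v a : ℕ) < m := (v a).2
  have hlt : (v a : ℕ) - 1 < m := by omega
  set p : Fin m := ⟨(v a : ℕ) - 1, hlt⟩ with hp
  set q : Fin m := v a with hqdef
  have hq : (q : ℕ) = (p : ℕ) + 1 := by simp [hp, hqdef]; omega
  set w : Vote m := v.trans (Equiv.swap p q) with hw
  set Q : Profile m n := Function.update P i w with hQ
  have hQi : Q i = w := Function.update_self i w P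
  have hQj : ∀ j, j ≠ i → Q j = P j := fun j hj => Function.update_of_ne hj w P
  set c : Fin m := v.symm p with hc
  have hvc : v c = p := v.apply_symm_apply p
  have hca : c ≠ a := by
    intro hh
    rw [hh] at hvc
    have : (v a : ℕ) = (p : ℕ) := by rw [hvc]
    simp [hp] at this; omega
  have hwa : w a = p := by
    show Equiv.swap p q (v a) = p
    rw [← hqdef, Equiv.swap_apply_right]
  have hwc : w c = q := by
    show Equiv.swap p q (v c) = q
    rw [hvc, Equiv.swap_apply_left]
  have hxc : ∀ x : Fin m, (v x = p ↔ x = c) := by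
    intro x; constructor
    · intro hh; rw [hc, ← hh]; simp
    · intro hh; rw [hh, hvc]
  have hxa : ∀ x : Fin m, (v x = q ↔ x = a) := by
    intro x; constructor
    · intro hh; exact v.injective (by rw [hh, hqdef])
    · intro hh; rw [hh, hqdef]
  -- comparisons unchanged for j = i on pairs other than {a,c}
  have hcmp : ∀ x y : Fin m, ¬(x = a ∧ y = c) → ¬(x = c ∧ y = a) →
      (Q i x < Q i y ↔ P i x < P i y) := by
    intro x y h1 h2
    rw [hQi, ← hv]
    show Equiv.swap p q (v x) < Equiv.swap p q (v y) ↔ v x < v y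
    apply swap_lt_iff _ _ _ _ hq
    · rintro ⟨hx, hy⟩; exact h2 ⟨(hxc x).1 hx, (hxa y).1 hy⟩
    · rintro ⟨hx, hy⟩; exact h1 ⟨(hxa x).1 hx, (hxc y).1 hy⟩
  have hpq : p < q := by rw [Fin.lt_def]; omega
  refine ⟨c, Q, ⟨i, ⟨p, q, hq, by rw [hQi]⟩, hQj⟩, ?_, hQj, hca, ?_, ?_, ?_, ?_, ?_⟩
  case refine_4 =>
    intro x hxa' hxc'
    rw [hQi]
    show Equiv.swap p q (v x) = P i x
    rw [Equiv.swap_apply_of_ne_of_ne (fun hh => hxc' ((hxc x).1 hh))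
      (fun hh => hxa' ((hxa x).1 hh))]
  · rw [hQi, hwa]; simp [hp, hqdef]; omega
  · have : (v c : ℕ) = (p : ℕ) := by rw [hvc]
    omega
  · intro x y h1 h2
    unfold nAbove
    congr 1
    apply Finset.filter_congr
    intro j _
    by_cases hj : j = i
    · subst hj; simp [hcmp x y h1 h2]
    · simp [hQj j hj]
  · unfold nAbove
    have hset : Finset.univ.filter (fun j => Q j a < Q j c)
        = insert i (Finset.univ.filter (fun j => P j a < P j c)) := by
      ext j
      simp only [Finset.mem_filter, Finset.mem_univ, true_and, Finset.mem_insert]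
      by_cases hj : j = i
      · subst hj
        rw [hQi, hwa, hwc]
        constructor
        · intro _; left; rfl
        · intro _; exact hpq
      · rw [hQj j hj]
        constructor
        · intro hh; right; exact hh
        · rintro (hh | hh)
          · exact absurd hh hj
          · exact hh
    rw [hset, Finset.card_insert_of_notMem]
    intro hmem
    rw [Finset.mem_filter] at hmem
    have h2 : P i a < P i c := hmem.2
    have h3 : (P i a : ℕ) < (P i c : ℕ) := h2
    have h4 : (v c : ℕ) = (p : ℕ) := by rw [hvc]
    have h5 : (P i c : ℕ) = (v c : ℕ) := by rw [← hv]
    have h6 : (P i a : ℕ) = (q : ℕ) := by rw [← hv, ← hqdef]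
    omega
  · unfold nAbove
    have hset : Finset.univ.filter (fun j => P j c < P j a)
        = insert i (Finset.univ.filter (fun j => Q j c < Q j a)) := by
      ext j
      simp only [Finset.mem_filter, Finset.mem_univ, true_and, Finset.mem_insert]
      by_cases hj : j = i
      · subst hj
        constructor
        · intro _; left; rfl
        · intro _
          have hgoal : v c < v a := by rw [hvc, ← hqdef]; exact hpq
          exact hgoal
      · rw [hQj j hj]
        constructor
        · intro hh; right; exact hh
        · rintro (hh | hh)
          · exact absurd hh hj
          · exact hh
    rw [hset, Finset.card_insert_of_notMem]
    intro hmem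
    rw [Finset.mem_filter] at hmem
    have h2 : Q i c < Q i a := hmem.2
    rw [hQi, hwa, hwc] at h2
    have h3 : (q : ℕ) < (p : ℕ) := h2
    omega

lemma moveUp {m n : ℕ} (a : Fin m) :
    ∀ d : ℕ, ∀ (P : Profile m n) (i : Fin n) (b : Fin m), b ≠ a →
      (P i b : ℕ) + d = (P i a : ℕ) →
      ∃ Q : Profile m n, Reach AdjSwap d P Q ∧
        (∀ x, nAbove Q x a ≤ nAbove P x a) ∧
        (∀ x, nAbove P a x ≤ nAbove Q a x) ∧
        nAbove P a b < nAbove Q a b ∧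
        nAbove Q b a < nAbove P b a := by
  intro d
  induction d with
  | zero =>
    intro P i b hba hpos
    exact absurd ((P i).injective (Fin.ext (by omega))) hba
  | succ d ih =>
    intro P i b hba hpos
    have h0 : 0 < (P i a : ℕ) := by omega
    obtain ⟨c, Q1, hadj, hQa, hQj, hc_a, hcpos, hunch, hupd, hQac, hQca⟩ := swapStep P i a h0
    by_cases hd : d = 0
    · subst hd
      have hcb : c = b := (P i).injective (Fin.ext (by omega))
      subst hcb
      refine ⟨Q1, ⟨Q1, hadj, rfl⟩, ?_, ?_, by omega, by omega⟩
      · intro x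
        by_cases hx : x = c
        · subst hx; omega
        · rw [hunch x a (fun hh => hc_a hh.2.symm) (fun hh => hx hh.1)]
      · intro x
        by_cases hx : x = c
        · subst hx; omega
        · rw [hunch a x (fun hh => hx hh.2) (fun hh => hc_a hh.1.symm)]
    · have hcb : c ≠ b := by
        intro hh; subst hh; omega
      have hQ1b : (Q1 i b : ℕ) = (P i b : ℕ) := by rw [hupd b hba hcb.symm]
      have hstep : (Q1 i b : ℕ) + d = (Q1 i a : ℕ) := by omega
      obtain ⟨Q2, hreach, m1, m2, m3, m4⟩ := ih Q1 i b hba hstep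
      have hab_eq : nAbove Q1 a b = nAbove P a b :=
        hunch a b (fun hh => hcb hh.2.symm) (fun hh => hc_a hh.1.symm)
      have hba_eq : nAbove Q1 b a = nAbove P b a :=
        hunch b a (fun hh => hc_a hh.2.symm) (fun hh => hcb hh.1.symm)
      refine ⟨Q2, ⟨Q1, hadj, hreach⟩, ?_, ?_, by omega, by omega⟩
      · intro x
        refine le_trans (m1 x) ?_
        by_cases hx : x = c
        · subst hx; omega
        · rw [hunch x a (fun hh => hc_a hh.2.symm) (fun hh => hx hh.1)]
      · intro x
        refine le_trans ?_ (m2 x)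
        by_cases hx : x = c
        · subst hx; omega
        · rw [hunch a x (fun hh => hx hh.2) (fun hh => hc_a hh.1.symm)]

lemma topOne {m n : ℕ} (a : Fin m) :
    ∀ d : ℕ, ∀ (P : Profile m n) (i : Fin n), (P i a : ℕ) = d →
      ∃ Q, Reach AdjSwap d P Q ∧ (Q i a : ℕ) = 0 ∧ ∀ j, j ≠ i → Q j = P j := by
  intro d
  induction d with
  | zero => intro P i h; exact ⟨P, rfl, h, fun _ _ => rfl⟩
  | succ d ih =>
    intro P i h
    obtain ⟨c, Q1, hadj, hQa, hQj, -, -, -, -, -, -⟩ := swapStep P i a (by omega)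
    obtain ⟨Q2, hreach, hQ2, hQ2j⟩ := ih Q1 i (by omega)
    exact ⟨Q2, ⟨Q1, hadj, hreach⟩, hQ2, fun j hj => (hQ2j j hj).trans (hQj j hj)⟩

lemma topAll {m n : ℕ} (a : Fin m) :
    ∀ K : ℕ, ∀ P : Profile m n,
      (Finset.univ.filter (fun i => (P i a : ℕ) ≠ 0)).card ≤ K →
      ∃ k Q, Reach AdjSwap k P Q ∧ ∀ i, (Q i a : ℕ) = 0 := by
  intro K
  induction K with
  | zero =>
    intro P h
    refine ⟨0, P, rfl, fun i => ?_⟩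
    by_contra hne
    have : i ∈ Finset.univ.filter (fun i => (P i a : ℕ) ≠ 0) := by simp [hne]
    have := Finset.card_pos.mpr ⟨i, this⟩
    omega
  | succ K ih =>
    intro P h
    by_cases hem : ∀ i, (P i a : ℕ) = 0
    · exact ⟨0, P, rfl, hem⟩
    · push_neg at hem
      obtain ⟨i, hi⟩ := hem
      obtain ⟨Q1, hreach, hQ1, hQ1j⟩ := topOne a (P i a : ℕ) P i rfl
      have hbmem : i ∈ Finset.univ.filter (fun j => (P j a : ℕ) ≠ 0) := by simp [hi]
      have hsub : Finset.univ.filter (fun j => (Q1 j a : ℕ) ≠ 0)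
          ⊆ (Finset.univ.filter (fun j => (P j a : ℕ) ≠ 0)).erase i := by
        intro j hj
        rw [Finset.mem_filter] at hj
        have hji : j ≠ i := by intro hh; subst hh; exact hj.2 hQ1
        rw [Finset.mem_erase, Finset.mem_filter]
        exact ⟨hji, Finset.mem_univ j, by rw [← hQ1j j hji]; exact hj.2⟩
      have hcard : (Finset.univ.filter (fun j => (Q1 j a : ℕ) ≠ 0)).card ≤ K := by
        have h1 := Finset.card_le_card hsub
        rw [Finset.card_erase_of_mem hbmem] at h1
        omega
      obtain ⟨k, Q2, hreach2, hall⟩ := ih Q1 hcard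
      exact ⟨_, Q2, reach_trans hreach hreach2, hall⟩

lemma nAbove_add {m n : ℕ} (P : Profile m n) {x y : Fin m} (h : x ≠ y) :
    nAbove P x y + nAbove P y x = n := by
  unfold nAbove
  have hrw : Finset.univ.filter (fun i => P i y < P i x)
      = Finset.univ.filter (fun i => ¬ P i x < P i y) := by
    apply Finset.filter_congr
    intro i _
    have hne : P i x ≠ P i y := fun hh => h ((P i).injective hh)
    constructor
    · intro hh; exact not_lt.mpr (le_of_lt hh)
    · intro hh; exact lt_of_le_of_ne (not_lt.mp hh) (Ne.symm hne)
  rw [hrw, Finset.card_filter_add_card_filter_not]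
  simp

lemma fixOne {m n : ℕ} (hn : 1 ≤ n) (a : Fin m) (P : Profile m n) (b : Fin m)
    (hb : b ≠ a) (htie : CondorcetTieWinner P a) (hab : adv P a b = 0) :
    ∃ k, k ≤ m - 1 ∧ ∃ Q, Reach AdjSwap k P Q ∧
      (∀ x, nAbove Q x a ≤ nAbove P x a) ∧
      (∀ x, nAbove P a x ≤ nAbove Q a x) ∧
      0 < adv Q a b := by
  have h1 : adv P b a = 0 := htie b hb
  have hsum : nAbove P a b + nAbove P b a = n := nAbove_add P (Ne.symm hb)
  unfold adv at h1 hab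
  have heq : nAbove P a b = nAbove P b a := by omega
  have hpos : 0 < nAbove P b a := by omega
  have hnon : (Finset.univ.filter (fun i => P i b < P i a)).Nonempty := by
    rw [← Finset.card_pos]
    exact hpos
  obtain ⟨i, hi⟩ := hnon
  rw [Finset.mem_filter] at hi
  have hlt : (P i b : ℕ) < (P i a : ℕ) := hi.2
  have hd : (P i b : ℕ) + ((P i a : ℕ) - (P i b : ℕ)) = (P i a : ℕ) := by omega
  obtain ⟨Q, hreach, m1, m2, m3, m4⟩ := moveUp a _ P i b hb hd
  refine ⟨_, ?_, Q, hreach, m1, m2, ?_⟩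
  · have := (P i a).2; omega
  · unfold adv
    omega

lemma fixAll {m n : ℕ} (hn : 1 ≤ n) (a : Fin m) :
    ∀ K : ℕ, ∀ P : Profile m n, CondorcetTieWinner P a →
      (Finset.univ.filter (fun b => b ≠ a ∧ adv P a b = 0)).card ≤ K →
      ∃ k, k ≤ K * (m - 1) ∧ ∃ Q, Reach AdjSwap k P Q ∧ CondorcetWinner Q a := by
  intro K
  induction K with
  | zero =>
    intro P htie hcard
    refine ⟨0, Nat.zero_le _, P, rfl, fun b hb => ?_⟩
    by_contra hle
    have hz : adv P a b = 0 := by omega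
    have : b ∈ Finset.univ.filter (fun b => b ≠ a ∧ adv P a b = 0) := by simp [hb, hz]
    have := Finset.card_pos.mpr ⟨b, this⟩
    omega
  | succ K ih =>
    intro P htie hcard
    by_cases hem : ∀ b, b ≠ a → adv P a b ≠ 0
    · exact ⟨0, Nat.zero_le _, P, rfl,
        fun b hb => Nat.pos_of_ne_zero (hem b hb)⟩
    · push_neg at hem
      obtain ⟨b, hb, hab0⟩ := hem
      obtain ⟨k1, hk1, Q, hreach, m1, m2, hwin⟩ := fixOne hn a P b hb htie hab0
      have htieQ : CondorcetTieWinner Q a := by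
        intro x hx
        have h1 := htie x hx
        have h2 := m1 x
        have h3 := m2 x
        unfold adv at h1 ⊢
        omega
      have hbmem : b ∈ Finset.univ.filter (fun b => b ≠ a ∧ adv P a b = 0) := by
        simp [hb, hab0]
      have hsub : Finset.univ.filter (fun x => x ≠ a ∧ adv Q a x = 0)
          ⊆ (Finset.univ.filter (fun x => x ≠ a ∧ adv P a x = 0)).erase b := by
        intro x hx
        rw [Finset.mem_filter] at hx
        obtain ⟨-, hxa, hxz⟩ := hx
        have hxb : x ≠ b := by
          intro hh; subst hh; omega
        have h2 := m1 x
        have h3 := m2 x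
        unfold adv at hxz ⊢
        rw [Finset.mem_erase, Finset.mem_filter]
        exact ⟨hxb, Finset.mem_univ x, hxa, by omega⟩
      have hcard2 : (Finset.univ.filter (fun x => x ≠ a ∧ adv Q a x = 0)).card ≤ K := by
        have h1 := Finset.card_le_card hsub
        rw [Finset.card_erase_of_mem hbmem] at h1
        omega
      obtain ⟨k2, hk2, R, hreach2, hwinR⟩ := ih Q htieQ hcard2
      refine ⟨k1 + k2, ?_, R, reach_trans hreach hreach2, hwinR⟩
      have : (K + 1) * (m - 1) = K * (m - 1) + (m - 1) := by ring
      omega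

/-- The Dodgson score defined via Condorcet winners (`Sc_D'`) differs from the
Dodgson score defined via Condorcet-tie winners (`Sc_D`) by at most `(m−1)²`:
`Sc_D[P](a) ≤ Sc_D'[P](a) ≤ Sc_D[P](a) + (m−1)²`. -/
theorem stmt_19 {m n : ℕ} (hm : 2 ≤ m) (hn : 1 ≤ n) (P : Profile m n) (a : Fin m) :
    ScD P a ≤ ScD' P a ∧ ScD' P a ≤ ScD P a + (m - 1) ^ 2 := by
  set S : Set ℕ := {k | ∃ Q, Reach AdjSwap k P Q ∧ CondorcetTieWinner Q a} with hS
  set S' : Set ℕ := {k | ∃ Q, Reach AdjSwap k P Q ∧ CondorcetWinner Q a} with hS'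
  have hwt : ∀ (Q : Profile m n), CondorcetWinner Q a → CondorcetTieWinner Q a := by
    intro Q hw b hb
    have h1 := hw b hb
    unfold adv at h1 ⊢
    omega
  have hsub : S' ⊆ S := by
    rintro k ⟨Q, hr, hw⟩
    exact ⟨Q, hr, hwt Q hw⟩
  -- S' is nonempty
  obtain ⟨k0, Q0, hr0, hz0⟩ := topAll a
    ((Finset.univ.filter (fun i => (P i a : ℕ) ≠ 0)).card) P le_rfl
  have hwin0 : CondorcetWinner Q0 a := by
    intro b hb
    have hall : ∀ i, Q0 i a < Q0 i b := by
      intro i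
      have h1 : (Q0 i a : ℕ) = 0 := hz0 i
      have h2 : Q0 i b ≠ Q0 i a := fun hh => hb ((Q0 i).injective hh)
      have h3 : (Q0 i b : ℕ) ≠ (Q0 i a : ℕ) := fun hh => h2 (Fin.ext hh)
      rw [Fin.lt_def]
      omega
    have h4 : nAbove Q0 a b = n := by
      unfold nAbove
      rw [Finset.filter_true_of_mem (fun i _ => hall i)]
      simp
    have h5 : nAbove Q0 a b + nAbove Q0 b a = n := nAbove_add Q0 (Ne.symm hb)
    unfold adv
    omega
  have hne' : S'.Nonempty := ⟨k0, Q0, hr0, hwin0⟩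
  have hneS : S.Nonempty := hne'.mono hsub
  constructor
  · exact Nat.sInf_le (hsub (Nat.sInf_mem hne'))
  · obtain ⟨Q, hrQ, htie⟩ := Nat.sInf_mem hneS
    have hcard : (Finset.univ.filter (fun b => b ≠ a ∧ adv Q a b = 0)).card ≤ m - 1 := by
      have hsub2 : Finset.univ.filter (fun b => b ≠ a ∧ adv Q a b = 0)
          ⊆ (Finset.univ : Finset (Fin m)).erase a := by
        intro x hx
        rw [Finset.mem_filter] at hx
        exact Finset.mem_erase.mpr ⟨hx.2.1, Finset.mem_univ x⟩
      have h1 := Finset.card_le_card hsub2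
      rw [Finset.card_erase_of_mem (Finset.mem_univ a)] at h1
      simpa using h1
    obtain ⟨k2, hk2, R, hr2, hwinR⟩ := fixAll hn a (m - 1) Q htie hcard
    have hmem : (ScD P a + k2) ∈ S' := ⟨R, reach_trans hrQ hr2, hwinR⟩
    have h6 : ScD' P a ≤ ScD P a + k2 := Nat.sInf_le hmem
    have h7 : (m - 1) ^ 2 = (m - 1) * (m - 1) := sq (m - 1)
    omega
end
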